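/- Morita equivalence of regular rational-faced framed simple convex polytopes is an equivalence relation: it is reflexive and symmetric, and if the framed polytopes (P_1,Q_1) and (P_2,Q_2) are Morita equivalent and the framed polytopes (P_2,Q_2) and (P_3,Q_3) are Morita equivalent, then (P_1,Q_1) and (P_3,Q_3) are Morita equivalent. -/

import Mathlib

open Set

noncomputable section

/-- Euclidean space `ℝ^N`. -/
abbrev Euc (N : ℕ) := Fin N → ℝ

/-- An integral affine function on `ℝ^N`: `x ↦ ∑ cᵢ xᵢ + b` with `cᵢ ∈ ℤ`, `b ∈ ℝ`. -/
def IsIntAff {N : ℕ} (f : Euc N → ℝ) : Prop :=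
  ∃ (c : Fin N → ℤ) (b : ℝ), ∀ x, f x = (∑ i, (c i : ℝ) * x i) + b

/-- An affine map between Euclidean spaces. -/
def IsAffMap {N₁ N₂ : ℕ} (η : Euc N₁ → Euc N₂) : Prop :=
  ∃ (T : Euc N₁ →ₗ[ℝ] Euc N₂) (c : Euc N₂), ∀ x, η x = T x + c

/-- An integral affine embedding `η : ℝ^{N₁} → ℝ^{N₂}`: an injective affine map such that the
pullbacks under `η` of integral affine functions on `ℝ^{N₂}` are exactly the integral affine
functions on `ℝ^{N₁}`. -/
def IsIntAffEmbedding {N₁ N₂ : ℕ} (η : Euc N₁ → Euc N₂) : Prop :=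
  Function.Injective η ∧ IsAffMap η ∧
    {g : Euc N₁ → ℝ | ∃ f : Euc N₂ → ℝ, IsIntAff f ∧ g = f ∘ η} = {g | IsIntAff g}

/-- A (nonempty) convex polytope: convex hull of a finite set of points. -/
def IsConvexPolytope {N : ℕ} (P : Set (Euc N)) : Prop :=
  P.Nonempty ∧ ∃ S : Finset (Euc N), P = convexHull ℝ (S : Set (Euc N))

/-- Dimension of a subset: the dimension of its affine hull. -/
def pdim {N : ℕ} (P : Set (Euc N)) : ℕ :=
  Module.finrank ℝ (affineSpan ℝ P).direction

/-- A (nonempty) face of `P`: a nonempty extreme subset of `P`. -/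
def IsFace {N : ℕ} (P F : Set (Euc N)) : Prop :=
  F.Nonempty ∧ IsExtreme ℝ P F

/-- A facet of `P`: a face of dimension `dim P - 1`. -/
def IsFacet {N : ℕ} (P Z : Set (Euc N)) : Prop :=
  IsFace P Z ∧ pdim Z + 1 = pdim P

/-- A polytope is rational-faced if each facet is contained in a level set of an integral
affine function which is non-constant on `P`. -/
def RationalFaced {N : ℕ} (P : Set (Euc N)) : Prop :=
  ∀ Z, IsFacet P Z → ∃ f : Euc N → ℝ, IsIntAff f ∧
    (∃ r : ℝ, ∀ x ∈ Z, f x = r) ∧ ∃ x ∈ P, ∃ y ∈ P, f x ≠ f y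

/-- A simple convex polytope of dimension `n`: each `s`-dimensional face is contained in
exactly `n - s` faces of dimension `s + 1`. -/
def IsSimplePolytope {N : ℕ} (P : Set (Euc N)) : Prop :=
  IsConvexPolytope P ∧
  ∀ s : ℕ, s < pdim P → ∀ F, IsFace P F → pdim F = s →
    {G : Set (Euc N) | IsFace P G ∧ pdim G = s + 1 ∧ F ⊆ G}.ncard = pdim P - s

/-- A rational polytope: rational-faced, and its affine hull is cut out by integral affine
equations. -/
def IsRationalPolytope {N : ℕ} (P : Set (Euc N)) : Prop :=
  RationalFaced P ∧ ∃ S : Set (Euc N → ℝ), (∀ f ∈ S, IsIntAff f) ∧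
    ((affineSpan ℝ P : Set (Euc N)) = {x | ∀ f ∈ S, f x = 0})

/-- A family `v` of `k` integral vectors extends to a `ℤ`-basis of `ℤ^N`. -/
def ExtendsToZBasis {N k : ℕ} (hk : k ≤ N) (v : Fin k → Fin N → ℤ) : Prop :=
  ∃ M : Matrix (Fin N) (Fin N) ℤ, IsUnit M.det ∧ ∀ i : Fin k, M (Fin.castLE hk i) = v i

/-- The Delzant condition at a point `q` of a locally polyhedral set `Q`: near `q`, the set `Q`
coincides with an intersection of half-spaces through `q` whose (primitive) integral inward
normal vectors form part of a `ℤ`-basis of `ℤ^N`. -/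
def DelzantAt {N : ℕ} (Q : Set (Euc N)) (q : Euc N) : Prop :=
  ∃ U : Set (Euc N), IsOpen U ∧ q ∈ U ∧
    ∃ (k : ℕ) (hk : k ≤ N) (v : Fin k → Fin N → ℤ), ExtendsToZBasis hk v ∧
      Q ∩ U = {x | ∀ i : Fin k, 0 ≤ ∑ j, (v i j : ℝ) * (x j - q j)} ∩ U

/-- A regular rational-faced framing `(L, Q)` of a convex simple polytope `P` in `ℝ^N`. -/
def IsRegularFraming {N : ℕ} (P : Set (Euc N)) (L : AffineSubspace ℝ (Euc N))
    (Q : Set (Euc N)) : Prop :=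
  Module.finrank ℝ L.direction = pdim P ∧
  P ⊆ (L : Set (Euc N)) ∧
  (∀ q ∈ Q, DelzantAt Q q) ∧
  (∀ G : Set (Euc N), IsFace Q G → (G ∩ (L : Set (Euc N))).Nonempty →
      L.direction ⊔ (affineSpan ℝ G).direction = ⊤) ∧
  (L : Set (Euc N)) ∩ Q = P

/-- A regular rational-faced framed simple convex polytope in `ℝ^N`. -/
structure FramedPolytope (N : ℕ) where
  P : Set (Euc N)
  L : AffineSubspace ℝ (Euc N)
  Q : Set (Euc N)
  simple : IsSimplePolytope P
  rationalFaced : RationalFaced P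
  framing : IsRegularFraming P L Q

/-- `U` is a neighborhood of `P` inside `Q`. -/
def IsNbhdIn {N : ℕ} (Q U P : Set (Euc N)) : Prop :=
  ∃ V : Set (Euc N), IsOpen V ∧ P ⊆ V ∧ U = Q ∩ V

/-- A Morita equivalence embedding of framed polytopes. -/
def IsMoritaEmbedding {N₁ N₂ : ℕ} (A : FramedPolytope N₁) (B : FramedPolytope N₂)
    (η : Euc N₁ → Euc N₂) : Prop :=
  IsIntAffEmbedding η ∧ η '' A.P = B.P ∧
    ∃ U₁ U₂, IsNbhdIn A.Q U₁ A.P ∧ IsNbhdIn B.Q U₂ B.P ∧ η '' U₁ = U₂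

/-- Morita equivalence of framed polytopes: both admit Morita equivalence embeddings into a
third framed polytope. -/
def MoritaEquiv {N₁ N₂ : ℕ} (A : FramedPolytope N₁) (B : FramedPolytope N₂) : Prop :=
  ∃ (N₃ : ℕ) (C : FramedPolytope N₃) (η : Euc N₁ → Euc N₃) (ν : Euc N₂ → Euc N₃),
    IsMoritaEmbedding A C η ∧ IsMoritaEmbedding B C ν

/-- The set of positive last coefficients `c_N` of integral combinations `∑ cᵢ αᵢ` lying in
the direction space of `L`. -/
def weightSet {N : ℕ} (Ldir : Submodule ℝ (Euc N)) (α : Fin N → Fin N → ℤ) : Set ℕ :=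
  {m | 0 < m ∧ ∃ d : Fin N → ℤ, (∀ i : Fin N, (i : ℕ) = N - 1 → d i = (m : ℤ)) ∧
    (fun j => ((∑ i, d i * α i j : ℤ) : ℝ)) ∈ Ldir}

/-- A `ℤ`-basis `α` of `ℤ^N` adapted to the pair of facets `ζP ⊆ ζQ` (for a polytope of
dimension `n`): `α_1, …, α_{n-1}` lie in the direction space of `ζP` and
`α_1, …, α_{N-1}` lie in the direction space of `ζQ`. -/
def IsAdmissibleBasis {N : ℕ} (n : ℕ) (ζP ζQ : Set (Euc N)) (α : Fin N → Fin N → ℤ) : Prop :=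
  IsUnit (Matrix.of α).det ∧
  (∀ i : Fin N, (i : ℕ) < n - 1 → (fun j => ((α i j : ℝ))) ∈ (affineSpan ℝ ζP).direction) ∧
  (∀ i : Fin N, (i : ℕ) < N - 1 → (fun j => ((α i j : ℝ))) ∈ (affineSpan ℝ ζQ).direction)

/-- The facet `ζP ⊆ ζQ` has weight `w` with respect to a framing with direction space `Ldir`:
adapted `ℤ`-bases exist, and for each of them the minimal positive last coefficient of an
integral combination lying in `Ldir` is `w`. -/
def HasWeight {N : ℕ} (n : ℕ) (Ldir : Submodule ℝ (Euc N)) (ζP ζQ : Set (Euc N))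
    (w : ℕ) : Prop :=
  (∃ α, IsAdmissibleBasis n ζP ζQ α) ∧
  ∀ α, IsAdmissibleBasis n ζP ζQ α →
    (weightSet Ldir α).Nonempty ∧ sInf (weightSet Ldir α) = w

/-!
A Morita embedding is automatically an affine isomorphism: by the Delzant condition, `Q` has
interior points arbitrarily close to every point of `P`, so the image of the embedding, an affine
subspace, contains a nonempty open set and is therefore everything. Its inverse is then again a Morita embedding, and Morita
embeddings compose, so `A ~ B ~ C` is witnessed by `A → D₁ → B → D₂`, where `D₁ → B` inverts
the embedding `B → D₁`.
-/

section MoritaEquivalence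

variable {N N₁ N₂ N₃ : ℕ}

lemma AffineMap.surjective_of_nonempty_interior_range {V W : Type*} [NormedAddCommGroup V]
    [NormedSpace ℝ V] [NormedAddCommGroup W] [NormedSpace ℝ W] (f : V →ᵃ[ℝ] W)
    (h : (interior (range f)).Nonempty) : Function.Surjective f := by
  have hspan : affineSpan ℝ (range f) = ⊤ :=
    top_unique <| isOpen_interior.affineSpan_eq_top h ▸ affineSpan_mono ℝ interior_subset
  have hrange : ((⊤ : AffineSubspace ℝ V).map f : Set W) = range f := by
    rw [AffineSubspace.coe_map, AffineSubspace.top_coe, image_univ]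
  rw [← hrange, AffineSubspace.affineSpan_coe] at hspan
  rw [← range_eq_univ, ← hrange, hspan, AffineSubspace.top_coe]

lemma isAffMap_iff_exists_affineMap {η : Euc N₁ → Euc N₂} :
    IsAffMap η ↔ ∃ f : Euc N₁ →ᵃ[ℝ] Euc N₂, ⇑f = η := by
  constructor
  · rintro ⟨T, c, hη⟩
    exact ⟨T.toAffineMap + AffineMap.const ℝ _ c, funext fun x => by simp [hη]⟩
  · rintro ⟨f, rfl⟩
    exact ⟨f.linear, f 0, fun x => by simpa using f.map_vadd 0 x⟩

lemma IsAffMap.continuous {η : Euc N₁ → Euc N₂} (h : IsAffMap η) : Continuous η := by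
  obtain ⟨f, rfl⟩ := isAffMap_iff_exists_affineMap.1 h
  exact f.continuous_of_finiteDimensional

lemma isIntAffEmbedding_iff {η : Euc N₁ → Euc N₂} :
    IsIntAffEmbedding η ↔ Function.Injective η ∧ IsAffMap η ∧
      (∀ f, IsIntAff f → IsIntAff (f ∘ η)) ∧ ∀ g, IsIntAff g → ∃ f, IsIntAff f ∧ g = f ∘ η := by
  simp only [IsIntAffEmbedding, Set.Subset.antisymm_iff, subset_def, mem_ofPred_eq]
  constructor
  · rintro ⟨hinj, haff, hcomp, hex⟩
    exact ⟨hinj, haff, fun f hf => hcomp _ ⟨f, hf, rfl⟩, hex⟩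
  · rintro ⟨hinj, haff, hcomp, hex⟩
    exact ⟨hinj, haff, fun g ⟨f, hf, hg⟩ => hg ▸ hcomp f hf, hex⟩

namespace IsIntAffEmbedding

lemma id : IsIntAffEmbedding (id : Euc N → Euc N) :=
  isIntAffEmbedding_iff.2 ⟨Function.injective_id,
    isAffMap_iff_exists_affineMap.2 ⟨AffineMap.id ℝ _, rfl⟩,
    fun _ hf => hf, fun g hg => ⟨g, hg, rfl⟩⟩

lemma comp {η : Euc N₁ → Euc N₂} {ν : Euc N₂ → Euc N₃} (hη : IsIntAffEmbedding η)
    (hν : IsIntAffEmbedding ν) : IsIntAffEmbedding (ν ∘ η) := by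
  obtain ⟨hηinj, hηaff, hηcomp, hηex⟩ := isIntAffEmbedding_iff.1 hη
  obtain ⟨hνinj, hνaff, hνcomp, hνex⟩ := isIntAffEmbedding_iff.1 hν
  obtain ⟨f, rfl⟩ := isAffMap_iff_exists_affineMap.1 hηaff
  obtain ⟨g, rfl⟩ := isAffMap_iff_exists_affineMap.1 hνaff
  refine isIntAffEmbedding_iff.2 ⟨hνinj.comp hηinj,
    isAffMap_iff_exists_affineMap.2 ⟨g.comp f, rfl⟩, fun h hh => hηcomp _ (hνcomp h hh), ?_⟩
  intro h hh
  obtain ⟨h₂, hh₂, rfl⟩ := hηex h hh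
  obtain ⟨h₃, hh₃, rfl⟩ := hνex h₂ hh₂
  exact ⟨h₃, hh₃, rfl⟩

lemma symm (e : Euc N₁ ≃ᵃ[ℝ] Euc N₂) (he : IsIntAffEmbedding e) : IsIntAffEmbedding e.symm := by
  obtain ⟨-, -, hcomp, hex⟩ := isIntAffEmbedding_iff.1 he
  refine isIntAffEmbedding_iff.2 ⟨e.symm.injective,
    isAffMap_iff_exists_affineMap.2 ⟨e.symm.toAffineMap, rfl⟩, fun f hf => ?_,
    fun g hg => ⟨g ∘ e, hcomp g hg, funext fun y => by simp⟩⟩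
  obtain ⟨f', hf', rfl⟩ := hex f hf
  convert hf' using 1
  exact funext fun y => by simp

end IsIntAffEmbedding

lemma ExtendsToZBasis.exists_forall_sum_mul_eq_one {k : ℕ} {hk : k ≤ N} {v : Fin k → Fin N → ℤ}
    (hv : ExtendsToZBasis hk v) : ∃ w : Euc N, ∀ i, ∑ j, (v i j : ℝ) * w j = 1 := by
  obtain ⟨M, hdet, hMv⟩ := hv
  have hunit : IsUnit (M.map (Int.castRingHom ℝ)) :=
    (M.isUnit_iff_isUnit_det.2 hdet).map (Int.castRingHom ℝ).mapMatrix
  obtain ⟨w, hw⟩ := Matrix.mulVec_surjective_iff_isUnit.2 hunit 1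
  refine ⟨w, fun i => ?_⟩
  simpa [Matrix.mulVec, dotProduct, hMv] using congrFun hw (Fin.castLE hk i)

lemma DelzantAt.mem_closure_interior {Q : Set (Euc N)} {q : Euc N} (hq : DelzantAt Q q) :
    q ∈ closure (interior Q) := by
  obtain ⟨U, hU, hqU, k, hk, v, hv, hQU⟩ := hq
  obtain ⟨w, hw⟩ := hv.exists_forall_sum_mul_eq_one
  set ℓ : Fin k → Euc N → ℝ := fun i x => ∑ j, (v i j : ℝ) * (x j - q j)
  have hℓ : ∀ i (t : ℝ), ℓ i (q + t • w) = t := fun i t => by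
    simp only [ℓ, Pi.add_apply, Pi.smul_apply, smul_eq_mul, add_sub_cancel_left]
    rw [Finset.sum_congr rfl fun j _ => mul_left_comm _ t _, ← Finset.mul_sum, hw i, mul_one]
  have hcone : {x | ∀ i, 0 < ℓ i x} ∩ U ⊆ interior Q := by
    refine interior_maximal (fun x ⟨hx, hxU⟩ => ?_) ?_
    · exact (hQU ▸ ⟨fun i => (hx i).le, hxU⟩ : x ∈ Q ∩ U).1
    · rw [ofPred_forall]
      exact (isOpen_iInter_of_finite fun i => isOpen_lt continuous_const (by fun_prop)).inter hU
  have hray : Filter.Tendsto (fun t : ℝ => q + t • w) (nhdsWithin 0 (Ioi 0)) (nhds q) :=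
    ((continuous_const.add (continuous_id.smul continuous_const)).tendsto' 0 q
      (by simp)).mono_left nhdsWithin_le_nhds
  refine mem_closure_of_tendsto hray ?_
  filter_upwards [self_mem_nhdsWithin, hray (hU.mem_nhds hqU)] with t ht htU
  exact hcone ⟨fun i => (hℓ i t).symm ▸ ht, htU⟩

lemma FramedPolytope.P_subset_Q (A : FramedPolytope N) : A.P ⊆ A.Q :=
  A.framing.2.2.2.2 ▸ inter_subset_right

lemma FramedPolytope.nonempty_interior_Q_inter (A : FramedPolytope N) {V : Set (Euc N)}
    (hV : IsOpen V) (hPV : A.P ⊆ V) : (interior A.Q ∩ V).Nonempty := by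
  obtain ⟨q, hq⟩ := A.simple.1.1
  have hqQ : q ∈ closure (interior A.Q) :=
    (A.framing.2.2.1 q (A.P_subset_Q hq)).mem_closure_interior
  exact (mem_closure_iff.1 hqQ V hV (hPV hq)).mono (inter_comm _ _).subset

namespace IsMoritaEmbedding

variable {A : FramedPolytope N₁} {B : FramedPolytope N₂} {C : FramedPolytope N₃}

lemma id (A : FramedPolytope N) : IsMoritaEmbedding A A id :=
  ⟨.id, image_id _, A.Q, A.Q, ⟨univ, isOpen_univ, subset_univ _, (inter_univ _).symm⟩,
    ⟨univ, isOpen_univ, subset_univ _, (inter_univ _).symm⟩, image_id _⟩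

lemma surjective {η : Euc N₁ → Euc N₂} (h : IsMoritaEmbedding A B η) :
    Function.Surjective η := by
  obtain ⟨⟨-, haff, -⟩, -, U₁, -, -, ⟨V₂, hV₂, hPV₂, rfl⟩, hU⟩ := h
  obtain ⟨f, rfl⟩ := isAffMap_iff_exists_affineMap.1 haff
  refine f.surjective_of_nonempty_interior_range <|
    (B.nonempty_interior_Q_inter hV₂ hPV₂).mono (interior_maximal ?_ (isOpen_interior.inter hV₂))
  calc interior B.Q ∩ V₂ ⊆ B.Q ∩ V₂ := inter_subset_inter_left _ interior_subset
    _ = f '' U₁ := hU.symm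
    _ ⊆ range f := image_subset_range _ _

lemma exists_affineEquiv {η : Euc N₁ → Euc N₂} (h : IsMoritaEmbedding A B η) :
    ∃ e : Euc N₁ ≃ᵃ[ℝ] Euc N₂, ⇑e = η := by
  obtain ⟨f, rfl⟩ := isAffMap_iff_exists_affineMap.1 h.1.2.1
  exact ⟨AffineEquiv.ofBijective ⟨h.1.1, h.surjective⟩, rfl⟩

lemma symm (e : Euc N₁ ≃ᵃ[ℝ] Euc N₂) (h : IsMoritaEmbedding A B e) :
    IsMoritaEmbedding B A e.symm := by
  obtain ⟨hint, hP, U₁, U₂, hU₁, hU₂, hU⟩ := h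
  refine ⟨hint.symm e, ?_, U₂, U₁, hU₂, hU₁, ?_⟩
  · rw [← hP, e.image_symm, e.injective.preimage_image]
  · rw [← hU, e.image_symm, e.injective.preimage_image]

lemma exists_symm {η : Euc N₁ → Euc N₂} (h : IsMoritaEmbedding A B η) :
    ∃ σ : Euc N₂ → Euc N₁, IsMoritaEmbedding B A σ := by
  obtain ⟨e, rfl⟩ := h.exists_affineEquiv
  exact ⟨e.symm, h.symm e⟩

lemma comp {η : Euc N₁ → Euc N₂} {ν : Euc N₂ → Euc N₃} (hη : IsMoritaEmbedding A B η)
    (hν : IsMoritaEmbedding B C ν) : IsMoritaEmbedding A C (ν ∘ η) := by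
  obtain ⟨e, rfl⟩ := hν.exists_affineEquiv
  obtain ⟨hηint, hηP, -, -, ⟨V₁, hV₁, hPV₁, rfl⟩, ⟨V₂, hV₂, hPV₂, rfl⟩, hηU⟩ := hη
  obtain ⟨hνint, hνP, -, -, ⟨V₂', hV₂', hPV₂', rfl⟩, ⟨V₃, hV₃, hPV₃, rfl⟩, hνU⟩ := hν
  refine ⟨hηint.comp hνint, by rw [image_comp, hηP, hνP], A.Q ∩ (V₁ ∩ η ⁻¹' V₂'),
    C.Q ∩ (V₃ ∩ e '' V₂),
    ⟨_, hV₁.inter (hV₂'.preimage hηint.2.1.continuous),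
      subset_inter hPV₁ (image_subset_iff.1 (hηP ▸ hPV₂')), rfl⟩,
    ⟨_, hV₃.inter (e.toContinuousAffineEquiv.toHomeomorph.isOpenMap V₂ hV₂),
      subset_inter hPV₃ (hνP ▸ image_mono hPV₂), rfl⟩, ?_⟩
  calc (e ∘ η) '' (A.Q ∩ (V₁ ∩ η ⁻¹' V₂'))
      = e '' (η '' (A.Q ∩ V₁) ∩ V₂') := by rw [image_comp, ← inter_assoc, image_inter_preimage]
    _ = e '' (B.Q ∩ V₂') ∩ e '' V₂ := by
      rw [hηU, ← image_inter e.injective, inter_right_comm]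
    _ = C.Q ∩ (V₃ ∩ e '' V₂) := by rw [hνU, inter_assoc]

end IsMoritaEmbedding

end MoritaEquivalence

/-- Morita equivalence of regular rational-faced framed simple convex
polytopes is an equivalence relation: reflexive, symmetric, and transitive. -/
theorem statement_6 :
    (∀ (N : ℕ) (A : FramedPolytope N), MoritaEquiv A A) ∧
    (∀ (N₁ N₂ : ℕ) (A : FramedPolytope N₁) (B : FramedPolytope N₂),
      MoritaEquiv A B → MoritaEquiv B A) ∧
    (∀ (N₁ N₂ N₃ : ℕ) (A : FramedPolytope N₁) (B : FramedPolytope N₂)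
      (C : FramedPolytope N₃), MoritaEquiv A B → MoritaEquiv B C → MoritaEquiv A C) := by
  refine ⟨fun N A => ⟨N, A, id, id, .id A, .id A⟩,
    fun N₁ N₂ A B ⟨N, D, η, ν, hη, hν⟩ => ⟨N, D, ν, η, hν, hη⟩, ?_⟩
  rintro N₁ N₂ N₃ A B C ⟨M, D, η, ν, hη, hν⟩ ⟨M', D', ν', ξ, hν', hξ⟩
  obtain ⟨σ, hσ⟩ := hν.exists_symm
  exact ⟨M', D', ν' ∘ σ ∘ η, ξ, (hη.comp hσ).comp hν', hξ⟩

end
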